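/- In any strongly connected component of a finite labeled directed graph, if for some pair of vertices u, v both a path of parity +1 and a path of parity −1 from u to v exist within the component, then for EVERY pair of vertices a, b in the component, paths from a to b of both parities exist within the component. Consequently every strongly connected component is either single-parity (each ordered vertex pair connected by paths of exactly one parity) or multiple-parity (each ordered vertex pair connected by paths of both parities). -/

import Mathlib

/-!
Path parities are signs that multiply under concatenation. If `u ⟶ v` has paths of both parities, then for any
`a, b` in the component, composing a fixed path `a ⟶ u`, either `u ⟶ v` path and a fixed path
`v ⟶ b` yields two paths `a ⟶ b` whose parities differ by the factor `-1`; these are the two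
parities. Otherwise no pair has both parities, and strong connectivity gives every pair one.
-/

inductive Reach {V : Type*} (E : Finset (V × V)) (w : V × V → ℤ) : V → V → ℤ → Prop
  | refl (u : V) : Reach E w u u 1
  | step {u v t : V} {x : ℤ} : Reach E w u v x → (v, t) ∈ E → Reach E w u t (x * w (v, t))

namespace Reach

variable {V : Type*} {E : Finset (V × V)} {w : V × V → ℤ}

theorem trans {u v t : V} {x y : ℤ} (h₁ : Reach E w u v x) (h₂ : Reach E w v t y) :
    Reach E w u t (x * y) := by
  induction h₂ with
  | refl => simpa using h₁
  | step _ he ih => rw [← mul_assoc]; exact ih.step he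

theorem eq_one_or_eq_neg_one (hw : ∀ e ∈ E, w e = -1 ∨ w e = 1) {u v : V} {x : ℤ}
    (h : Reach E w u v x) : x = 1 ∨ x = -1 := by
  induction h with
  | refl => exact Or.inl rfl
  | step _ he ih => rcases ih with rfl | rfl <;> rcases hw _ he with h | h <;> simp [h]

theorem one_and_neg_one_of_neg (hw : ∀ e ∈ E, w e = -1 ∨ w e = 1) {a b : V} {z : ℤ}
    (h : Reach E w a b z) (hneg : Reach E w a b (-z)) :
    Reach E w a b 1 ∧ Reach E w a b (-1) := by
  rcases h.eq_one_or_eq_neg_one hw with rfl | rfl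
  · exact ⟨h, hneg⟩
  · exact ⟨hneg, h⟩

theorem one_and_neg_one_of_detour (hw : ∀ e ∈ E, w e = -1 ∨ w e = 1) {a u v b : V} {x y : ℤ}
    (hau : Reach E w a u x) (hpos : Reach E w u v 1) (hneg : Reach E w u v (-1))
    (hvb : Reach E w v b y) : Reach E w a b 1 ∧ Reach E w a b (-1) := by
  have hpos' : Reach E w a b (x * y) := by simpa using hau.trans (hpos.trans hvb)
  have hneg' : Reach E w a b (-(x * y)) := by simpa using hau.trans (hneg.trans hvb)
  exact one_and_neg_one_of_neg hw hpos' hneg'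

end Reach

/-- In a strongly connected component `V₁` (paths within the component, i.e. using only
edges of `(V₁ × V₁) ∩ E`): if some ordered pair of vertices is connected by paths of both
parities, then every ordered pair of vertices of the component is connected by paths of
both parities.  Consequently every SCC is either single-parity (every ordered pair is
connected by paths of exactly one parity) or multiple-parity (every ordered pair is
connected by paths of both parities). -/
theorem stmt_12 {V : Type*} [DecidableEq V] (E : Finset (V × V)) (w : V × V → ℤ)
    (hw : ∀ e ∈ E, w e = -1 ∨ w e = 1)
    (V₁ : Finset V)
    (E₁ : Finset (V × V)) (hE₁ : E₁ = E.filter (fun e => e.1 ∈ V₁ ∧ e.2 ∈ V₁))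
    (hconn : ∀ a ∈ V₁, ∀ b ∈ V₁, ∃ x : ℤ, Reach E₁ w a b x) :
    ((∃ u ∈ V₁, ∃ v ∈ V₁, Reach E₁ w u v 1 ∧ Reach E₁ w u v (-1)) →
      ∀ a ∈ V₁, ∀ b ∈ V₁, Reach E₁ w a b 1 ∧ Reach E₁ w a b (-1)) ∧
    ((∀ a ∈ V₁, ∀ b ∈ V₁,
        (Reach E₁ w a b 1 ∧ ¬ Reach E₁ w a b (-1)) ∨
        (Reach E₁ w a b (-1) ∧ ¬ Reach E₁ w a b 1)) ∨
      (∀ a ∈ V₁, ∀ b ∈ V₁, Reach E₁ w a b 1 ∧ Reach E₁ w a b (-1))) := by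
  have hw₁ : ∀ e ∈ E₁, w e = -1 ∨ w e = 1 := fun e he =>
    hw e (Finset.mem_filter.mp (hE₁ ▸ he)).1
  have spread : (∃ u ∈ V₁, ∃ v ∈ V₁, Reach E₁ w u v 1 ∧ Reach E₁ w u v (-1)) →
      ∀ a ∈ V₁, ∀ b ∈ V₁, Reach E₁ w a b 1 ∧ Reach E₁ w a b (-1) := by
    rintro ⟨u, hu, v, hv, hpos, hneg⟩ a ha b hb
    obtain ⟨x, hau⟩ := hconn a ha u hu
    obtain ⟨y, hvb⟩ := hconn v hv b hb
    exact Reach.one_and_neg_one_of_detour hw₁ hau hpos hneg hvb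
  refine ⟨spread, ?_⟩
  by_cases hmulti : ∃ u ∈ V₁, ∃ v ∈ V₁, Reach E₁ w u v 1 ∧ Reach E₁ w u v (-1)
  · exact Or.inr (spread hmulti)
  · push Not at hmulti
    refine Or.inl fun a ha b hb => ?_
    obtain ⟨x, hab⟩ := hconn a ha b hb
    rcases hab.eq_one_or_eq_neg_one hw₁ with rfl | rfl
    · exact Or.inl ⟨hab, hmulti a ha b hb hab⟩
    · exact Or.inr ⟨hab, fun hpos => hmulti a ha b hb hpos hab⟩
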